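/- For all real numbers ε₁ and all ε₂ > −0.6, the Kolmogorov distance between the standard Gaussian N(0,1) and the Gaussian N(ε₁,1+ε₂) satisfies d_K(N(0,1), N(ε₁,1+ε₂)) ≤ |ε₁|/√(2π) + |ε₂|/√(2eπ). -/

import Mathlib

/-!
Both distributions are images of `N(0,1)`: with `σ = √(1 + ε₂)`, the CDF of `N(ε₁, σ²)` at `t` is
`Φ ((t - ε₁) / σ)`. Passing through `Φ (t - ε₁)`, the mean shift costs at most `|ε₁| ‖φ‖_∞`, with
`‖φ‖_∞ = 1/√(2π)`. For the rescaling `s ↦ s / σ`, the density on the interval between `s` and `s / σ`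
is largest at its endpoint `x` nearer to `0`, and the interval has length `|c - 1| |x|` with
`c ∈ {σ, σ⁻¹}`; so the cost is at most `|c - 1| · max |x| φ(x) = |c - 1| / √(2eπ)`, and
`|c - 1| ≤ |σ² - 1|` as soon as `σ (σ + 1) ≥ 1`, which holds for `σ² > 0.4`.
-/

open MeasureTheory ProbabilityTheory Real Set

local notation "Φ" => cdf (gaussianReal 0 1)
local notation "φ" => gaussianPDFReal 0 1

lemma cdf_gaussianReal_sub_cdf (μ : ℝ) {v : NNReal} (hv : v ≠ 0) (a b : ℝ) :
    cdf (gaussianReal μ v) b - cdf (gaussianReal μ v) a = ∫ x in a..b, gaussianPDFReal μ v x := by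
  have hcdf (t : ℝ) : cdf (gaussianReal μ v) t = ∫ x in Iic t, gaussianPDFReal μ v x := by
    rw [cdf_eq_real, measureReal_def, gaussianReal_apply_eq_integral μ hv,
      ENNReal.toReal_ofReal (integral_nonneg (gaussianPDFReal_nonneg μ v))]
  rw [hcdf, hcdf]
  exact intervalIntegral.integral_Iic_sub_Iic (integrable_gaussianPDFReal μ v).integrableOn
    (integrable_gaussianPDFReal μ v).integrableOn

lemma abs_cdf_gaussianReal_sub_le (μ : ℝ) {v : NNReal} (hv : v ≠ 0) {a b C : ℝ}
    (hC : ∀ x ∈ uIoc a b, gaussianPDFReal μ v x ≤ C) :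
    |cdf (gaussianReal μ v) b - cdf (gaussianReal μ v) a| ≤ C * |b - a| := by
  rw [cdf_gaussianReal_sub_cdf μ hv, ← Real.norm_eq_abs]
  refine intervalIntegral.norm_integral_le_of_norm_le_const fun x hx ↦ ?_
  rw [Real.norm_of_nonneg (gaussianPDFReal_nonneg μ v x)]
  exact hC x hx

lemma cdf_gaussianReal (μ : ℝ) {v : NNReal} (hv : v ≠ 0) (t : ℝ) :
    cdf (gaussianReal μ v) t = Φ ((t - μ) / √v) := by
  have hσ : 0 < √(v : ℝ) := Real.sqrt_pos.mpr (by positivity)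
  have hmap : (gaussianReal 0 1).map (fun x ↦ √v * x + μ) = gaussianReal μ v := by
    have hscale : (gaussianReal 0 1).map (√v * ·) = gaussianReal 0 v := by
      rw [gaussianReal_map_const_mul, mul_zero, mul_one]
      congr
      exact sq_sqrt v.2
    rw [← Function.comp_def (· + μ) (√v * ·), ← Measure.map_map (by fun_prop) (by fun_prop),
      hscale, gaussianReal_map_add_const, zero_add]
  rw [cdf_eq_real, cdf_eq_real, measureReal_def, measureReal_def, ← hmap,
    Measure.map_apply (by fun_prop) measurableSet_Iic]
  congr 2
  ext x
  simp only [mem_preimage, mem_Iic, le_div_iff₀ hσ]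
  constructor <;> intro h <;> linarith

lemma gaussianPDFReal_le_of_abs_sub_le (μ : ℝ) (v : NNReal) {x y : ℝ} (h : |x - μ| ≤ |y - μ|) :
    gaussianPDFReal μ v y ≤ gaussianPDFReal μ v x := by
  have hsq : (x - μ) ^ 2 ≤ (y - μ) ^ 2 := sq_le_sq.mpr h
  simp only [gaussianPDFReal]
  gcongr

lemma abs_mul_exp_neg_sq_div_two_le (x : ℝ) : |x| * exp (-x ^ 2 / 2) ≤ exp (-1 / 2) := by
  -- `|x| ≤ (x² + 1) / 2 = 1 + (x² - 1) / 2 ≤ exp ((x² - 1) / 2)`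
  have habs : |x| ≤ exp ((x ^ 2 - 1) / 2) := by
    have := add_one_le_exp ((x ^ 2 - 1) / 2)
    nlinarith [sq_nonneg (|x| - 1), sq_abs x]
  calc |x| * exp (-x ^ 2 / 2) ≤ exp ((x ^ 2 - 1) / 2) * exp (-x ^ 2 / 2) := by gcongr
    _ = exp (-1 / 2) := by rw [← exp_add]; ring_nf

lemma abs_mul_gaussianPDFReal_le (x : ℝ) : |x| * φ x ≤ 1 / √(2 * exp 1 * π) := by
  have hsqrt : √(2 * exp 1 * π) = exp (1 / 2) * √(2 * π) := by
    rw [exp_half, ← Real.sqrt_mul (exp_pos 1).le]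
    ring_nf
  calc |x| * φ x = (|x| * exp (-x ^ 2 / 2)) / √(2 * π) := by
        simp [gaussianPDFReal, div_eq_inv_mul, mul_left_comm]
    _ ≤ exp (-1 / 2) / √(2 * π) := by gcongr; exact abs_mul_exp_neg_sq_div_two_le x
    _ = 1 / √(2 * exp 1 * π) := by
        rw [hsqrt, neg_div, exp_neg, div_mul_eq_div_div, inv_eq_one_div]

lemma abs_cdf_sub_le (a b : ℝ) : |Φ b - Φ a| ≤ |b - a| / √(2 * π) := by
  have hmax (x : ℝ) : φ x ≤ 1 / √(2 * π) := by
    simpa [gaussianPDFReal] using gaussianPDFReal_le_of_abs_sub_le 0 1 (by simp : |(0 : ℝ) - 0| ≤ |x - 0|)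
  rw [div_eq_mul_one_div, mul_comm]
  exact abs_cdf_gaussianReal_sub_le 0 one_ne_zero fun x _ ↦ hmax x

lemma abs_le_abs_of_mem_uIoc_mul {x y c : ℝ} (hc : 1 ≤ c) (hy : y ∈ uIoc x (c * x)) :
    |x| ≤ |y| := by
  rcases mem_uIcc.mp (uIoc_subset_uIcc hy) with ⟨h₁, h₂⟩ | ⟨h₁, h₂⟩ <;>
    cases abs_cases x <;> cases abs_cases y <;> nlinarith

lemma abs_cdf_mul_sub_cdf_le (x : ℝ) {c : ℝ} (hc : 1 ≤ c) :
    |Φ (c * x) - Φ x| ≤ (c - 1) / √(2 * exp 1 * π) := by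
  have hφ : ∀ y ∈ uIoc x (c * x), φ y ≤ φ x := fun y hy ↦
    gaussianPDFReal_le_of_abs_sub_le 0 1 (by simpa using abs_le_abs_of_mem_uIoc_mul hc hy)
  calc |Φ (c * x) - Φ x| ≤ φ x * |c * x - x| := abs_cdf_gaussianReal_sub_le 0 one_ne_zero hφ
    _ = (c - 1) * (|x| * φ x) := by
        rw [← sub_one_mul, abs_mul, abs_of_nonneg (by linarith : 0 ≤ c - 1)]
        ring
    _ ≤ (c - 1) * (1 / √(2 * exp 1 * π)) := by
        gcongr
        exact abs_mul_gaussianPDFReal_le x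
    _ = (c - 1) / √(2 * exp 1 * π) := mul_one_div _ _

lemma abs_cdf_sub_cdf_div_le (s : ℝ) {σ : ℝ} (hσ : 0 < σ) (hσ₁ : 1 ≤ σ * (σ + 1)) :
    |Φ s - Φ (s / σ)| ≤ |σ ^ 2 - 1| / √(2 * exp 1 * π) := by
  rcases le_total 1 σ with h | h
  · have hs : s = σ * (s / σ) := by field_simp
    calc |Φ s - Φ (s / σ)| = |Φ (σ * (s / σ)) - Φ (s / σ)| := by rw [← hs]
      _ ≤ (σ - 1) / √(2 * exp 1 * π) := abs_cdf_mul_sub_cdf_le _ h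
      _ ≤ |σ ^ 2 - 1| / √(2 * exp 1 * π) := by
          gcongr
          rw [abs_of_nonneg (by nlinarith)]
          nlinarith
  · have hinv : 1 ≤ σ⁻¹ := one_le_inv_iff₀.mpr ⟨hσ, h⟩
    calc |Φ s - Φ (s / σ)| = |Φ (σ⁻¹ * s) - Φ s| := by rw [abs_sub_comm, inv_mul_eq_div]
      _ ≤ (σ⁻¹ - 1) / √(2 * exp 1 * π) := abs_cdf_mul_sub_cdf_le _ hinv
      _ ≤ |σ ^ 2 - 1| / √(2 * exp 1 * π) := by
          gcongr
          rw [abs_of_nonpos (by nlinarith), inv_eq_one_div, div_sub_one hσ.ne', div_le_iff₀ hσ]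
          nlinarith

/-- For all `ε₁` and `ε₂ > −0.6`, the Kolmogorov distance between the standard Gaussian
`N(0,1)` and the Gaussian `N(ε₁,1+ε₂)` is at most `|ε₁|/√(2π) + |ε₂|/√(2eπ)`. -/
theorem kolmogorov_dist_gaussian_mean_variance_shift (ε₁ ε₂ : ℝ) (hε₂ : -0.6 < ε₂) :
    (⨆ t : ℝ, |cdf (gaussianReal 0 1) t - cdf (gaussianReal ε₁ ((1 + ε₂).toNNReal)) t|)
      ≤ |ε₁| / Real.sqrt (2 * π) + |ε₂| / Real.sqrt (2 * Real.exp 1 * π) := by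
  have hv : 0 < 1 + ε₂ := by linarith
  have hσ : 0 < √(1 + ε₂) := Real.sqrt_pos.mpr hv
  have hσsq : √(1 + ε₂) ^ 2 = 1 + ε₂ := sq_sqrt hv.le
  refine Real.iSup_le (fun t ↦ ?_) (by positivity)
  rw [cdf_gaussianReal ε₁ (by simpa using hv), Real.coe_toNNReal _ hv.le]
  calc |Φ t - Φ ((t - ε₁) / √(1 + ε₂))|
      ≤ |Φ t - Φ (t - ε₁)| + |Φ (t - ε₁) - Φ ((t - ε₁) / √(1 + ε₂))| := abs_sub_le _ _ _
    _ ≤ |ε₁| / √(2 * π) + |ε₂| / √(2 * exp 1 * π) := by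
        gcongr
        · simpa [abs_sub_comm] using abs_cdf_sub_le (t - ε₁) t
        · simpa [hσsq] using abs_cdf_sub_cdf_div_le (t - ε₁) hσ (by nlinarith)
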